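/- Let V be a finite-dimensional real inner-product-free vector space, and let h₁, h₂ be symmetric bilinear forms on V. Let W ⊂ V be a codimension-1 subspace. Assume h₁ restricted to W is positive definite, h₂ vanishes on W (i.e. h₂(w,w')=0 for all w,w' ∈ W), and h₂ induces a positive form on V/W (equivalently, h₂(y,y)>0 for some/any y ∉ W). Then there exists u₀ ∈ ℝ such that for every u > u₀ the form h_u := h₁ + u·h₂ is positive definite on V. -/

import Mathlib

/-!
Only the quadratic forms `Q₁ x = h₁ x x`, `Q₂ x = h₂ x x` and their polarisations matter.
Since `Q₁` is positive definite on `W`, its polarisation has an orthogonal complement to `W`;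
take `y ∉ W` in it. For `w ∈ W` the function `t ↦ Q₂ (y + t • w) = Q₂ y + t · polar Q₂ y w`
is affine and positive, so `y` is `Q₂`-orthogonal to `W` too. Writing `x = w + t • y` gives
`(Q₁ + u • Q₂) x = Q₁ w + t² (Q₁ y + u Q₂ y)`, positive for `x ≠ 0` once `u > -Q₁ y / Q₂ y`.
-/

open Module Submodule

theorem Submodule.sup_span_singleton_eq_top_of_finrank_eq_add_one {K V : Type*} [Field K]
    [AddCommGroup V] [Module K V] [FiniteDimensional K V] {W : Submodule K V}
    (hW : finrank K V = finrank K W + 1) {y : V} (hy : y ∉ W) : W ⊔ K ∙ y = ⊤ := by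
  rw [sup_span_singleton_eq_top_iff hy]
  have := W.finrank_quotient_add_finrank
  omega

namespace QuadraticMap

variable {V : Type*} [AddCommGroup V] [Module ℝ V]

theorem map_add_smul (Q : QuadraticForm ℝ V) (x y : V) (t : ℝ) :
    Q (x + t • y) = Q x + t * polar Q x y + t ^ 2 * Q y := by
  have h := polar_smul_right Q t x y
  simp only [polar, QuadraticMap.map_smul, smul_eq_mul] at h ⊢
  linear_combination h

theorem polar_eq_zero_of_forall_nonneg_add_smul (Q : QuadraticForm ℝ V) {x y : V}
    (hy : Q y = 0) (h : ∀ t : ℝ, 0 ≤ Q (x + t • y)) : polar Q x y = 0 := by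
  by_contra hxy
  have h' := h (-(Q x + 1) / polar Q x y)
  rw [map_add_smul, hy, div_mul_cancel₀ _ hxy] at h'
  linarith

theorem exists_notMem_forall_polar_eq_zero [FiniteDimensional ℝ V] (Q : QuadraticForm ℝ V)
    {W : Submodule ℝ V} (hW : W ≠ ⊤) (hQ : ∀ w ∈ W, w ≠ 0 → 0 < Q w) :
    ∃ y ∉ W, ∀ w ∈ W, polar Q w y = 0 := by
  let B : LinearMap.BilinForm ℝ V := polarBilin Q
  have hrefl : B.IsRefl := fun x y h => by
    rwa [polarBilin_apply_apply, polar_comm] at h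
  have hcompl : IsCompl W (B.orthogonal W) := by
    refine (B.isCompl_orthogonal_iff_disjoint hrefl).mpr (disjoint_def.mpr fun w hw hw' => ?_)
    by_contra hw0
    have hww : polar Q w w = 0 := hw' w hw
    rw [polar_self, two_nsmul] at hww
    linarith [hQ w hw hw0]
  obtain ⟨y, hy, hy0⟩ := (B.orthogonal W).ne_bot_iff.mp fun h =>
    hW (by simpa [h] using hcompl.sup_eq_top)
  exact ⟨y, fun hyW => hy0 (disjoint_def.mp hcompl.disjoint y hyW hy), hy⟩

theorem posDef_add_smul_of_sup_span_singleton_eq_top (Q₁ Q₂ : QuadraticForm ℝ V)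
    {W : Submodule ℝ V} {y : V} (hspan : W ⊔ ℝ ∙ y = ⊤) (hQ₁ : ∀ w ∈ W, w ≠ 0 → 0 < Q₁ w)
    (hQ₂ : ∀ w ∈ W, Q₂ w = 0) (h₁ : ∀ w ∈ W, polar Q₁ w y = 0)
    (h₂ : ∀ w ∈ W, polar Q₂ w y = 0) {u : ℝ} (hu : 0 < Q₁ y + u * Q₂ y) :
    (Q₁ + u • Q₂).PosDef := by
  intro x hx
  obtain ⟨w, hw, _, hty, rfl⟩ := mem_sup.mp (hspan ▸ mem_top : x ∈ W ⊔ ℝ ∙ y)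
  obtain ⟨t, rfl⟩ := mem_span_singleton.mp hty
  have hval : (Q₁ + u • Q₂) (w + t • y) = Q₁ w + t ^ 2 * (Q₁ y + u * Q₂ y) := by
    rw [add_apply, smul_apply, map_add_smul, map_add_smul, h₁ w hw, h₂ w hw, hQ₂ w hw,
      smul_eq_mul]
    ring
  rw [hval]
  rcases eq_or_ne t 0 with rfl | ht
  · rw [zero_smul, add_zero] at hx
    simpa using hQ₁ w hw hx
  · have hw₀ : 0 ≤ Q₁ w := by
      rcases eq_or_ne w 0 with rfl | hw0
      · exact (map_zero Q₁).ge
      · exact (hQ₁ w hw hw0).le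
    positivity

theorem exists_forall_posDef_add_smul [FiniteDimensional ℝ V] (Q₁ Q₂ : QuadraticForm ℝ V)
    {W : Submodule ℝ V} (hcodim : finrank ℝ V = finrank ℝ W + 1)
    (hQ₁ : ∀ w ∈ W, w ≠ 0 → 0 < Q₁ w) (hQ₂ : ∀ w ∈ W, Q₂ w = 0)
    (hQ₂_pos : ∀ y ∉ W, 0 < Q₂ y) : ∃ u₀ : ℝ, ∀ u > u₀, (Q₁ + u • Q₂).PosDef := by
  have hW : W ≠ ⊤ := fun h => by
    rw [h, finrank_top] at hcodim
    omega
  obtain ⟨y, hy, h₁⟩ := Q₁.exists_notMem_forall_polar_eq_zero hW hQ₁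
  have h₂ (w : V) (hw : w ∈ W) : polar Q₂ w y = 0 := by
    rw [polar_comm]
    refine Q₂.polar_eq_zero_of_forall_nonneg_add_smul (hQ₂ w hw) fun t => (hQ₂_pos _ ?_).le
    exact fun h => hy (by simpa using W.sub_mem h (W.smul_mem t hw))
  have hQ₂y := hQ₂_pos y hy
  refine ⟨-Q₁ y / Q₂ y, fun u hu => posDef_add_smul_of_sup_span_singleton_eq_top Q₁ Q₂
    (W.sup_span_singleton_eq_top_of_finrank_eq_add_one hcodim hy) hQ₁ hQ₂ h₁ h₂ ?_⟩
  rw [gt_iff_lt, div_lt_iff₀ hQ₂y] at hu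
  linarith

end QuadraticMap

theorem pos_def_of_large_u_general
    (V : Type*) [AddCommGroup V] [Module ℝ V] [FiniteDimensional ℝ V]
    (h₁ h₂ : LinearMap.BilinForm ℝ V)
    (W : Submodule ℝ V)
    (hcodim : Module.finrank ℝ V = Module.finrank ℝ W + 1)
    (hposW : ∀ w ∈ W, w ≠ 0 → 0 < h₁ w w)
    (hvan : ∀ w ∈ W, ∀ w' ∈ W, h₂ w w' = 0)
    (hquot : ∀ y : V, y ∉ W → 0 < h₂ y y) :
    ∃ u₀ : ℝ, ∀ u : ℝ, u > u₀ → ∀ x : V, x ≠ 0 →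
      0 < (h₁ + u • h₂) x x := by
  obtain ⟨u₀, hu₀⟩ := QuadraticMap.exists_forall_posDef_add_smul h₁.toQuadraticMap
    h₂.toQuadraticMap hcodim hposW (fun w hw => hvan w hw w hw) hquot
  refine ⟨u₀, fun u hu x hx => ?_⟩
  simpa [LinearMap.BilinMap.toQuadraticMap_apply] using hu₀ u hu x hx

/-- The linear algebra lemma: if `h₁` is positive definite on a codimension-1
subspace `W`, `h₂` vanishes on `W` and is positive on vectors outside `W`,
then `h₁ + u • h₂` is positive definite for all sufficiently large `u`. -/
theorem pos_def_of_large_u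
    (V : Type*) [AddCommGroup V] [Module ℝ V] [FiniteDimensional ℝ V]
    (h₁ h₂ : LinearMap.BilinForm ℝ V)
    (hsymm₁ : ∀ x y, h₁ x y = h₁ y x) (hsymm₂ : ∀ x y, h₂ x y = h₂ y x)
    (W : Submodule ℝ V)
    (hcodim : Module.finrank ℝ V = Module.finrank ℝ W + 1)
    (hposW : ∀ w ∈ W, w ≠ 0 → 0 < h₁ w w)
    (hvan : ∀ w ∈ W, ∀ w' ∈ W, h₂ w w' = 0)
    (hquot : ∀ y : V, y ∉ W → 0 < h₂ y y) :
    ∃ u₀ : ℝ, ∀ u : ℝ, u > u₀ → ∀ x : V, x ≠ 0 →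
      0 < (h₁ + u • h₂) x x :=
  pos_def_of_large_u_general V h₁ h₂ W hcodim hposW hvan hquot
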